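/- arXiv:0902.4867 — 3 statements merged into one kernel-verified Lean document; each statement's English description precedes it below -/
import Mathlib

section
/- Let G be a finite group with |G| invertible modulo ℓ, R = R(G) its complex representation ring, and ε : R → 𝔽_ℓ the mod-ℓ dimension augmentation. Then Tor_n^R(𝔽_ℓ, ℤ) = 0 for all n > 0, where ℤ is an R-module via the dimension augmentation R → ℤ. -/
open CategoryTheory

/-- The complex representation ring of a group `G`, realized as the ring of virtual
characters: the subring of `G → ℂ` generated by characters of finite-dimensional complex
representations. -/
def RepRing (G : Type) [Group G] : Subring (G → ℂ) :=
  Subring.closure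
    {χ | ∃ (n : ℕ) (ρ : G →* GL (Fin n) ℂ),
      χ = fun g => Matrix.trace (ρ g : Matrix (Fin n) (Fin n) ℂ)}

/-!
Let `N = |G|` and let `χ` be the character of the regular representation. Since `χ` vanishes
off the identity, `r χ = ε(r) χ` for every virtual character `r`, so `z ↦ z χ` is an
`R`-linear map `ℤ → R` whose composite with `ε` is multiplication by `ε(χ) = N`. Hence `N`
acts on `ℤ` through a free module and kills `Tor_{n+1}^R(-, ℤ)`, while `ℓ` kills `𝔽_ℓ` and
hence `Tor^R(𝔽_ℓ, -)`. As `ℓ` and `N` are coprime, `Tor_{n+1}^R(𝔽_ℓ, ℤ) = 0`.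
-/

open CategoryTheory.Limits CategoryTheory.MonoidalCategory

namespace CategoryTheory

section Preadditive

variable {C : Type*} [Category C] [Preadditive C]

lemma Iso.zsmul_id_eq_zero {X Y : C} (e : X ≅ Y) {a : ℤ} (h : a • 𝟙 Y = 0) : a • 𝟙 X = 0 := by
  simpa using congrArg (fun f => e.hom ≫ f ≫ e.inv) h

lemma Limits.IsZero.of_zsmul_id_eq_zero {X : C} {a b : ℤ} (hab : IsCoprime a b)
    (ha : a • 𝟙 X = 0) (hb : b • 𝟙 X = 0) : IsZero X := by
  obtain ⟨u, v, huv⟩ := hab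
  rw [IsZero.iff_id_eq_zero, ← one_smul ℤ (𝟙 X), ← huv, add_smul, mul_smul, mul_smul, ha, hb,
    smul_zero, smul_zero, add_zero]

end Preadditive

section LeftDerived

variable {C D : Type*} [Category C] [Abelian C] [HasProjectiveResolutions C]
  [Category D] [Abelian D]

instance projectiveResolutions_additive : (projectiveResolutions C).Additive where
  map_add {X Y f g} :=
    (HomotopyCategory.eq_of_homotopy _ _ (ProjectiveResolution.liftHomotopy (f + g) _ _
      (ProjectiveResolution.lift_commutes _ _ _)
      (by simp [ProjectiveResolution.lift_commutes]))).trans (Functor.map_add _)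

instance Functor.leftDerived_additive (F : C ⥤ D) [F.Additive] (n : ℕ) :
    (F.leftDerived n).Additive := by
  dsimp only [Functor.leftDerived, Functor.leftDerivedToHomotopyCategory]
  infer_instance

lemma Functor.zsmul_id_leftDerived_obj_succ_eq_zero (F : C ⥤ D) [F.Additive] {Y P : C}
    [Projective P] {b : ℤ} (u : Y ⟶ P) (v : P ⟶ Y) (huv : u ≫ v = b • 𝟙 Y) (n : ℕ) :
    b • 𝟙 ((F.leftDerived (n + 1)).obj Y) = 0 := by
  rw [← Functor.map_id, ← Functor.map_zsmul, ← huv, Functor.map_comp,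
    (F.isZero_leftDerived_obj_projective_succ n P).eq_zero_of_tgt ((F.leftDerived (n + 1)).map u),
    zero_comp]

lemma Functor.zsmul_id_leftDerived_obj_eq_zero (F : C ⥤ D) [F.Additive] {a : ℤ}
    (ha : ∀ M, a • 𝟙 (F.obj M) = 0) (n : ℕ) (Y : C) :
    a • 𝟙 ((F.leftDerived n).obj Y) = 0 := by
  let P := projectiveResolution Y
  refine (P.isoLeftDerivedObj F n).zsmul_id_eq_zero ?_
  have hcomplex : a • 𝟙 ((F.mapHomologicalComplex _).obj P.complex) = 0 := by
    ext i
    exact ha _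
  rw [← Functor.map_id, ← Functor.map_zsmul, hcomplex, Functor.map_zero]

end LeftDerived

section Tor

variable {C : Type*} [Category C] [MonoidalCategory C] [Abelian C] [MonoidalPreadditive C]
  [HasProjectiveResolutions C]

lemma isZero_Tor_succ_of_isCoprime {X Y P : C} [Projective P] {a b : ℤ} (hab : IsCoprime a b)
    (hX : a • 𝟙 X = 0) (u : Y ⟶ P) (v : P ⟶ Y) (huv : u ≫ v = b • 𝟙 Y) (n : ℕ) :
    IsZero (((Tor C (n + 1)).obj X).obj Y) := by
  have htensor (M : C) : a • 𝟙 (X ⊗ M) = 0 := by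
    simpa [hX] using (((tensoringRight C).obj M).map_zsmul (f := 𝟙 X) (r := a)).symm
  exact IsZero.of_zsmul_id_eq_zero hab
    (Functor.zsmul_id_leftDerived_obj_eq_zero _ htensor _ Y)
    (Functor.zsmul_id_leftDerived_obj_succ_eq_zero _ u v huv n)

end Tor
end CategoryTheory

lemma exists_comp_eq_zsmul_id_of_mul_eq_smul {R : Type} [CommRing R] (ε : R →+* ℤ) (χ : R)
    (hχ : ∀ r, r * χ = ε r • χ) :
    letI : Module R ℤ := Module.compHom ℤ ε
    ∃ (u : ModuleCat.of R ℤ ⟶ ModuleCat.of R R) (v : ModuleCat.of R R ⟶ ModuleCat.of R ℤ),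
      u ≫ v = ε χ • 𝟙 _ := by
  let _ : Module R ℤ := Module.compHom ℤ ε
  refine ⟨ModuleCat.ofHom
    { toFun z := z • χ
      map_add' x y := add_smul x y χ
      map_smul' r z := by
        change (ε r * z) • χ = r * (z • χ)
        rw [mul_smul_comm, hχ, smul_smul, mul_comm] },
    ModuleCat.ofHom { toFun := ε, map_add' := ε.map_add, map_smul' := ε.map_mul }, ?_⟩
  ext z
  change ε (z • χ) = ε χ • z
  rw [map_zsmul, smul_eq_mul, smul_eq_mul, mul_comm]

section RegularRepresentation

variable (G : Type) [Group G] [Finite G]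

noncomputable def regularRep : G →* GL (Fin (Nat.card G)) ℂ :=
  ((Matrix.permMatrixHom (R := ℂ)).comp
    ((Finite.equivFin G).permCongrHom.toMonoidHom.comp (MulAction.toPermHom G G))).toHomUnits

noncomputable def regularChar : RepRing G :=
  ⟨fun g => Matrix.trace (regularRep G g : Matrix (Fin (Nat.card G)) (Fin (Nat.card G)) ℂ),
    Subring.subset_closure ⟨Nat.card G, regularRep G, rfl⟩⟩

variable {G}

lemma regularChar_one : (regularChar G : G → ℂ) 1 = Nat.card G := by
  change Matrix.trace (regularRep G 1 : Matrix (Fin (Nat.card G)) (Fin (Nat.card G)) ℂ) = _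
  simp

lemma regularChar_of_ne_one {g : G} (hg : g ≠ 1) : (regularChar G : G → ℂ) g = 0 := by
  change Matrix.trace (regularRep G g : Matrix (Fin (Nat.card G)) (Fin (Nat.card G)) ℂ) = _
  simp only [regularRep, MulEquiv.toMonoidHom_eq_coe, MonoidHom.coe_toHomUnits,
    MonoidHom.coe_comp, MonoidHom.coe_coe, Equiv.permCongrHom_coe, Function.comp_apply,
    MulAction.toPermHom_apply, Matrix.permMatrixHom_apply, Matrix.trace_permutation,
    Equiv.Perm.coe_inv, Function.fixedPoints_symm, Nat.cast_eq_zero]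
  rw [Set.ncard_eq_zero, Set.eq_empty_iff_forall_notMem]
  intro x hx
  apply hg
  simpa [Function.mem_fixedPoints, Function.IsFixedPt, Equiv.permCongr_apply,
    ← Equiv.eq_symm_apply] using hx

lemma mul_regularChar (ε : RepRing G →+* ℤ) (hε : ∀ χ : RepRing G, (ε χ : ℂ) = (χ : G → ℂ) 1)
    (r : RepRing G) : r * regularChar G = ε r • regularChar G := by
  ext g
  by_cases hg : g = 1
  · subst hg
    simp [regularChar_one, hε]
  · simp [regularChar_of_ne_one hg]

end RegularRepresentation

/-- Let `G` be a finite group with `|G|` invertible mod `ℓ`, `R = R(G)` its representation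
ring, `ε : R → ℤ` the dimension augmentation (evaluation of a virtual character at `1`),
and `𝔽_ℓ = ℤ/ℓ` the mod-`ℓ` augmentation module.  Then `Tor_n^R(𝔽_ℓ, ℤ) = 0` for `n > 0`. -/
theorem stmt_8 (G : Type) [Group G] [Finite G] (ℓ : ℕ) (hℓ : ℓ.Prime)
    (hord : ¬ ℓ ∣ Nat.card G)
    (ε : RepRing G →+* ℤ) (hε : ∀ χ : RepRing G, ((ε χ : ℂ)) = (χ : G → ℂ) 1)
    (n : ℕ) (hn : 0 < n) :
    letI : Module (RepRing G) ℤ := Module.compHom ℤ ε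
    letI : Module (RepRing G) (ZMod ℓ) :=
      Module.compHom (ZMod ℓ) ((Int.castRingHom (ZMod ℓ)).comp ε)
    Subsingleton
      (((Tor (ModuleCat (RepRing G)) n).obj (ModuleCat.of (RepRing G) (ZMod ℓ))).obj
        (ModuleCat.of (RepRing G) ℤ)) := by
  obtain ⟨m, rfl⟩ : ∃ m, n = m + 1 := ⟨n - 1, (Nat.succ_pred_eq_of_pos hn).symm⟩
  let _ : Module (RepRing G) ℤ := Module.compHom ℤ ε
  let _ : Module (RepRing G) (ZMod ℓ) :=
    Module.compHom (ZMod ℓ) ((Int.castRingHom (ZMod ℓ)).comp ε)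
  have hcard : ε (regularChar G) = Nat.card G := by
    exact_mod_cast (hε _).trans regularChar_one
  have hcop : IsCoprime (ℓ : ℤ) (ε (regularChar G)) :=
    hcard ▸ Nat.isCoprime_iff_coprime.mpr (hℓ.coprime_iff_not_dvd.mpr hord)
  have htorsion : (ℓ : ℤ) • 𝟙 (ModuleCat.of (RepRing G) (ZMod ℓ)) = 0 := by
    ext x
    simp
  obtain ⟨u, v, huv⟩ := exists_comp_eq_zsmul_id_of_mul_eq_smul ε _ (mul_regularChar ε hε)
  exact ModuleCat.isZero_iff_subsingleton.mp (isZero_Tor_succ_of_isCoprime hcop htorsion u v huv m)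
end

section
/- In the representation ring of the integer Heisenberg group H, if ζ and ζ' are roots of unity of coprime orders, then the irreducible representations V_ζ and V_{ζ'} satisfy V_ζ ⊗ V_{ζ'} ≅ V_{ζζ'}; in particular dim V_ζ = |ζ| (the order of ζ), and dim(V_ζ ⊗ V_{ζ'}) = |ζ|·|ζ'| = |ζζ'| = dim V_{ζζ'}. -/
open scoped TensorProduct

/-- The integer Heisenberg group `⟨x,y,z | [x,z]=[y,z]=1, [x,y]=z⟩`, realized as `ℤ³`
with the multiplication of upper-triangular unipotent `3×3` integral matrices. -/
@[ext]
structure Heis where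
  a : ℤ
  b : ℤ
  c : ℤ

instance : Mul Heis := ⟨fun g h => ⟨g.a + h.a, g.b + h.b, g.c + h.c + g.a * h.b⟩⟩
instance : One Heis := ⟨⟨0, 0, 0⟩⟩
instance : Inv Heis := ⟨fun g => ⟨-g.a, -g.b, -g.c + g.a * g.b⟩⟩

@[simp] lemma Heis.mul_a (g h : Heis) : (g * h).a = g.a + h.a := rfl
@[simp] lemma Heis.mul_b (g h : Heis) : (g * h).b = g.b + h.b := rfl
@[simp] lemma Heis.mul_c (g h : Heis) : (g * h).c = g.c + h.c + g.a * h.b := rfl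
@[simp] lemma Heis.one_a : (1 : Heis).a = 0 := rfl
@[simp] lemma Heis.one_b : (1 : Heis).b = 0 := rfl
@[simp] lemma Heis.one_c : (1 : Heis).c = 0 := rfl
@[simp] lemma Heis.inv_a (g : Heis) : g⁻¹.a = -g.a := rfl
@[simp] lemma Heis.inv_b (g : Heis) : g⁻¹.b = -g.b := rfl
@[simp] lemma Heis.inv_c (g : Heis) : g⁻¹.c = -g.c + g.a * g.b := rfl

instance : Group Heis where
  mul_assoc g h k := by ext <;> simp <;> ring
  one_mul g := by ext <;> simp
  mul_one g := by ext <;> simp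
  inv_mul_cancel g := by ext <;> simp

/-- The generator `x`. -/
def Heis.x : Heis := ⟨1, 0, 0⟩
/-- The generator `y`. -/
def Heis.y : Heis := ⟨0, 1, 0⟩
/-- The central generator `z = [x,y]`. -/
def Heis.z : Heis := ⟨0, 0, 1⟩

/-- A representation is irreducible: it has no proper nonzero invariant subspace. -/
def IsIrred {V : Type*} [AddCommGroup V] [Module ℂ V] (ρ : Representation ℂ Heis V) : Prop :=
  ∀ p : Submodule ℂ V, (∀ (g : Heis), ∀ v ∈ p, ρ g v ∈ p) → p = ⊥ ∨ p = ⊤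

/-
If `ρ y v = v`, the vectors `w k = x^k v` (`k : ZMod r`) are `y`-eigenvectors with the distinct
eigenvalues `ζ^{-k}`, hence a basis when `dim V = r = |ζ|`. Then `x^r v` is again fixed by `y`, so
it is a multiple `c v`; as `x^r` commutes with `x`, `x^r = c`, and `c = 1` because `x` has the
eigenvalue `1`. So `x` permutes the `w k` cyclically and `y` is diagonal in them.
For coprime orders `r, s` the Chinese remainder isomorphism `ZMod r × ZMod s ≃ ZMod (r s)` sends
`(k + 1, j + 1)` to `m + 1` when it sends `(k, j)` to `m`, and `(ζ ζ')^m = ζ^k ζ'^j`; so matching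
`w k ⊗ w' j` with `w'' m` intertwines `x` and `y`, which generate `H`.
-/

open Module

lemma ZMod.chineseRemainder_fst {m n : ℕ} (h : m.Coprime n) (x : ZMod (m * n)) :
    (ZMod.chineseRemainder h x).1 = ZMod.cast x :=
  Prod.fst_zmod_cast x

lemma ZMod.chineseRemainder_snd {m n : ℕ} (h : m.Coprime n) (x : ZMod (m * n)) :
    (ZMod.chineseRemainder h x).2 = ZMod.cast x :=
  Prod.snd_zmod_cast x

section Monoid

variable {M : Type*} [Monoid M]

lemma pow_val_injective {ζ : M} {r : ℕ} [NeZero r] (hr : orderOf ζ = r) :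
    Function.Injective fun k : ZMod r => ζ ^ k.val := fun k j h =>
  ZMod.val_injective r <| pow_injOn_Iio_orderOf (hr ▸ k.val_lt) (hr ▸ j.val_lt) h

lemma pow_val_cast {ζ : M} {n : ℕ} [NeZero n] (m : ZMod n) :
    ζ ^ (ZMod.cast m : ZMod (orderOf ζ)).val = ζ ^ m.val := by
  rw [ZMod.cast_eq_val, ZMod.val_natCast, pow_mod_orderOf]

end Monoid

lemma inv_pow_val_injective {K : Type*} [DivisionRing K] {ζ : Kˣ} {r : ℕ} [NeZero r]
    (hr : orderOf ζ = r) : Function.Injective fun k : ZMod r => (ζ ^ k.val : K)⁻¹ :=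
  fun k j h => by
    simp only [inv_inj, ← Units.val_pow_eq_pow_val, Units.val_inj] at h
    exact pow_val_injective hr h

lemma mul_pow_val_chineseRemainder_symm {M : Type*} [CommMonoid M] {ζ ζ' : M}
    (hcop : (orderOf ζ).Coprime (orderOf ζ')) [NeZero (orderOf ζ * orderOf ζ')]
    (k : ZMod (orderOf ζ)) (j : ZMod (orderOf ζ')) :
    (ζ * ζ') ^ ((ZMod.chineseRemainder hcop).symm (k, j)).val = ζ ^ k.val * ζ' ^ j.val := by
  set m := (ZMod.chineseRemainder hcop).symm (k, j)
  have hk : ZMod.cast m = k := by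
    rw [← ZMod.chineseRemainder_fst hcop, RingEquiv.apply_symm_apply]
  have hj : ZMod.cast m = j := by
    rw [← ZMod.chineseRemainder_snd hcop, RingEquiv.apply_symm_apply]
  rw [mul_pow, ← hk, ← hj, pow_val_cast, pow_val_cast]

namespace Module.End

variable {R M : Type*} [CommSemiring R] [AddCommMonoid M] [Module R M]

lemma apply_pow_apply_of_mul_eq_smul_mul {X Y : End R M} {c μ : R} (hXY : Y * X = c • (X * Y))
    {v : M} (hv : Y v = μ • v) (n : ℕ) : Y ((X ^ n) v) = (c ^ n * μ) • (X ^ n) v := by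
  induction n with
  | zero => simpa using hv
  | succ n ih =>
    have := congrArg (· ((X ^ n) v)) hXY
    simp only [mul_apply, LinearMap.smul_apply] at this
    rw [pow_succ', mul_apply, this, ih, map_smul, smul_smul, pow_succ', mul_assoc]

end Module.End

namespace Module.Basis

variable {ι R M : Type*} [CommRing R] [AddCommGroup M] [Module R M]

lemma repr_apply_of_apply_eq_smul (b : Basis ι R M) {f : End R M} {μ : ι → R}
    (hb : ∀ i, f (b i) = μ i • b i) (u : M) (j : ι) : b.repr (f u) j = μ j * b.repr u j := by
  have : b.coord j ∘ₗ f = μ j • b.coord j := b.ext fun i => by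
    rcases eq_or_ne i j with rfl | hij
    · simp [hb]
    · simp [hb, hij]
  simpa using congrArg (· u) this

lemma eq_repr_smul_of_apply_eq_smul [IsDomain R] (b : Basis ι R M) {f : End R M} {μ : ι → R}
    (hμ : Function.Injective μ) (hb : ∀ i, f (b i) = μ i • b i) {i : ι} {u : M}
    (hu : f u = μ i • u) : u = b.repr u i • b i := by
  refine b.ext_elem fun j => ?_
  rcases eq_or_ne i j with rfl | hij
  · simp
  · have : μ j * b.repr u j = μ i * b.repr u j := by
      rw [← repr_apply_of_apply_eq_smul b hb, hu]; simp
    rw [map_smul, repr_self, Finsupp.smul_apply, Finsupp.single_eq_of_ne hij.symm, smul_zero]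
    by_contra h
    exact hij (hμ (mul_right_cancel₀ h this).symm)

end Module.Basis

namespace Representation

variable {K G V W : Type*} [CommSemiring K] [Group G] [AddCommMonoid V] [Module K V]
  [AddCommMonoid W] [Module K W]

lemma comp_eq_comp_of_closure_eq_top {s : Set G} (hs : Subgroup.closure s = ⊤)
    {ρ : Representation K G V} {σ : Representation K G W} (e : V ≃ₗ[K] W)
    (h : ∀ g ∈ s, e.toLinearMap ∘ₗ ρ g = σ g ∘ₗ e.toLinearMap) (g : G) :
    e.toLinearMap ∘ₗ ρ g = σ g ∘ₗ e.toLinearMap := by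
  have : e.conjRingEquiv.toMonoidHom.comp ρ = σ :=
    MonoidHom.eq_of_eqOn_dense hs fun g hg =>
      (e.comp_toLinearMap_symm_eq _ _).2 (h g hg)
  rw [← this]
  ext; simp

end Representation

namespace Heis

lemma x_zpow (n : ℤ) : x ^ n = ⟨n, 0, 0⟩ := by
  induction n using Int.induction_on with
  | zero => rfl
  | succ n ih => rw [zpow_add_one, ih]; ext <;> simp [x]
  | pred n ih => rw [zpow_sub_one, ih]; ext <;> simp [x, sub_eq_add_neg]

lemma y_zpow (n : ℤ) : y ^ n = ⟨0, n, 0⟩ := by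
  induction n using Int.induction_on with
  | zero => rfl
  | succ n ih => rw [zpow_add_one, ih]; ext <;> simp [y]
  | pred n ih => rw [zpow_sub_one, ih]; ext <;> simp [y, sub_eq_add_neg]

lemma z_zpow (n : ℤ) : z ^ n = ⟨0, 0, n⟩ := by
  induction n using Int.induction_on with
  | zero => rfl
  | succ n ih => rw [zpow_add_one, ih]; ext <;> simp [z]
  | pred n ih => rw [zpow_sub_one, ih]; ext <;> simp [z, sub_eq_add_neg]

lemma eq_x_zpow_mul_y_zpow_mul_z_zpow (g : Heis) :
    g = x ^ g.a * y ^ g.b * z ^ (g.c - g.a * g.b) := by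
  ext <;> simp [x_zpow, y_zpow, z_zpow]

lemma z_eq_x_mul_y_mul_x_inv_mul_y_inv : z = x * y * x⁻¹ * y⁻¹ := by
  ext <;> simp [x, y, z]

lemma closure_x_y : Subgroup.closure {x, y} = ⊤ := by
  refine (Subgroup.eq_top_iff' _).2 fun g => ?_
  have hx : x ∈ Subgroup.closure {x, y} := Subgroup.subset_closure (by simp)
  have hy : y ∈ Subgroup.closure {x, y} := Subgroup.subset_closure (by simp)
  have hz : z ∈ Subgroup.closure {x, y} := by
    rw [z_eq_x_mul_y_mul_x_inv_mul_y_inv]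
    exact mul_mem (mul_mem (mul_mem hx hy) (inv_mem hx)) (inv_mem hy)
  rw [eq_x_zpow_mul_y_zpow_mul_z_zpow g]
  exact mul_mem (mul_mem (zpow_mem hx _) (zpow_mem hy _)) (zpow_mem hz _)

lemma y_mul_x : y * x = x * y * z⁻¹ := by
  ext <;> simp [x, y, z]

variable {K V : Type*} [Field K] [AddCommGroup V] [Module K V]

/-- In the model of `V_ζ` induced from `⟨x^r, y, z⟩`, this is the basis `x^k ⊗ 1`. -/
structure IsStandardBasis {r : ℕ} (ρ : Representation K Heis V) (ζ : Kˣ)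
    (w : Basis (ZMod r) K V) : Prop where
  x_apply (k : ZMod r) : ρ x (w k) = w (k + 1)
  y_apply (k : ZMod r) : ρ y (w k) = (ζ ^ k.val : K)⁻¹ • w k

variable {ρ : Representation K Heis V} {ζ : Kˣ}

lemma rep_y_mul_rep_x (hz : ρ z = (ζ : K) • 1) : ρ y * ρ x = (ζ : K)⁻¹ • (ρ x * ρ y) := by
  have hz_inv : ρ z⁻¹ = (ζ : K)⁻¹ • 1 := LinearMap.ext fun u =>
    (ρ.inv_apply_eq_iff).2 (by simp [hz, smul_smul])
  rw [← map_mul, y_mul_x, map_mul, map_mul, hz_inv, mul_smul_comm, mul_one]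

lemma rep_y_rep_x_pow_apply (hz : ρ z = (ζ : K) • 1) {v : V} (hv : ρ y v = v) (n : ℕ) :
    ρ y ((ρ x ^ n) v) = (ζ ^ n : K)⁻¹ • (ρ x ^ n) v := by
  rw [End.apply_pow_apply_of_mul_eq_smul_mul (rep_y_mul_rep_x hz) (μ := 1) (by simpa using hv),
    mul_one, inv_pow]

lemma exists_basis_rep_x_pow_apply {r : ℕ} [NeZero r] (hr : orderOf ζ = r)
    (hz : ρ z = (ζ : K) • 1) (hdim : finrank K V = r) {v : V} (hv : ρ y v = v) (hv0 : v ≠ 0) :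
    ∃ w : Basis (ZMod r) K V, ∀ k, w k = (ρ x ^ k.val) v := by
  have heig (k : ZMod r) : End.HasEigenvector (ρ y) (ζ ^ k.val : K)⁻¹ ((ρ x ^ k.val) v) := by
    refine ⟨End.mem_eigenspace_iff.2 (rep_y_rep_x_pow_apply hz hv _), fun h => hv0 ?_⟩
    rw [← map_pow] at h
    exact (ρ.apply_bijective _).1 (h.trans (map_zero _).symm)
  have hli := End.eigenvectors_linearIndependent' _ _ (inv_pow_val_injective hr) _ heig
  exact ⟨basisOfLinearIndependentOfCardEqFinrank hli (by simp [hdim]),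
    fun k => congrFun (coe_basisOfLinearIndependentOfCardEqFinrank _ _) k⟩

lemma rep_x_pow_eq_one {r : ℕ} [NeZero r] (hr : orderOf ζ = r) (hz : ρ z = (ζ : K) • 1)
    (hx : End.HasEigenvalue (ρ x) 1) {v : V} (hv : ρ y v = v) (w : Basis (ZMod r) K V)
    (hw : ∀ k, w k = (ρ x ^ k.val) v) : ρ x ^ r = 1 := by
  have hζr : (ζ ^ r : K) = 1 := by rw [← Units.val_pow_eq_pow_val, ← hr, pow_orderOf_eq_one]; rfl
  obtain ⟨c, hc⟩ : ∃ c : K, (ρ x ^ r) v = c • v := by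
    have hfix : ρ y ((ρ x ^ r) v) = (ζ ^ (0 : ZMod r).val : K)⁻¹ • (ρ x ^ r) v := by
      simpa [hζr] using rep_y_rep_x_pow_apply hz hv r
    refine ⟨w.repr ((ρ x ^ r) v) 0,
      (w.eq_repr_smul_of_apply_eq_smul (inv_pow_val_injective hr) (fun k => ?_) hfix).trans ?_⟩
    · rw [hw]; exact rep_y_rep_x_pow_apply hz hv _
    · simp [hw]
  have hscalar : ρ x ^ r = c • 1 := w.ext fun k => by
    rw [hw, LinearMap.smul_apply, End.one_apply, ← End.mul_apply, ← pow_mul_comm, End.mul_apply,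
      hc, map_smul]
  obtain ⟨u, hu⟩ := hx.exists_hasEigenvector
  have hfixu : (ρ x ^ r) u = u := by
    rw [End.pow_apply]
    exact Function.iterate_fixed (by simpa using hu.apply_eq_smul) r
  have hc1 : c = 1 := smul_left_injective K hu.2 <| by
    simpa [hscalar] using hfixu
  rw [hscalar, hc1, one_smul]

lemma exists_isStandardBasis {r : ℕ} [NeZero r] (hr : orderOf ζ = r) (hz : ρ z = (ζ : K) • 1)
    (hdim : finrank K V = r) (hx : End.HasEigenvalue (ρ x) 1) (hy : End.HasEigenvalue (ρ y) 1) :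
    ∃ w : Basis (ZMod r) K V, IsStandardBasis ρ ζ w := by
  obtain ⟨v, hv⟩ := hy.exists_hasEigenvector
  have hvy : ρ y v = v := by simpa using hv.apply_eq_smul
  obtain ⟨w, hw⟩ := exists_basis_rep_x_pow_apply hr hz hdim hvy hv.2
  have hxr := rep_x_pow_eq_one hr hz hx hvy w hw
  refine ⟨w, fun k => ?_, fun k => ?_⟩
  · rw [hw, hw, ← End.mul_apply, ← pow_succ', pow_eq_pow_mod _ hxr, ZMod.val_add,
      ZMod.val_one_eq_one_mod, Nat.add_mod_mod]
  · rw [hw]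
    exact rep_y_rep_x_pow_apply hz hvy _

variable {V' V'' : Type*} [AddCommGroup V'] [Module K V'] [AddCommGroup V''] [Module K V'']
  {ρ' : Representation K Heis V'} {ρ'' : Representation K Heis V''} {ζ' : Kˣ}

lemma IsStandardBasis.exists_tensorProduct_equiv (hcop : (orderOf ζ).Coprime (orderOf ζ'))
    [NeZero (orderOf ζ * orderOf ζ')] {w : Basis (ZMod (orderOf ζ)) K V}
    {w' : Basis (ZMod (orderOf ζ')) K V'} {w'' : Basis (ZMod (orderOf ζ * orderOf ζ')) K V''}
    (hw : IsStandardBasis ρ ζ w) (hw' : IsStandardBasis ρ' ζ' w')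
    (hw'' : IsStandardBasis ρ'' (ζ * ζ') w'') :
    ∃ e : (V ⊗[K] V') ≃ₗ[K] V'', ∀ g : Heis,
      e.toLinearMap ∘ₗ TensorProduct.map (ρ g) (ρ' g) = ρ'' g ∘ₗ e.toLinearMap := by
  set φ := (ZMod.chineseRemainder hcop).symm
  have hφ_succ (k j) : φ (k + 1, j + 1) = φ (k, j) + 1 := by
    rw [← map_one φ, ← map_add, Prod.mk_add_mk, Prod.fst_one, Prod.snd_one]
  have hφ_pow (k j) : (((ζ : K) * ζ') ^ (φ (k, j)).val)⁻¹ =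
      (ζ ^ k.val : K)⁻¹ * (ζ' ^ j.val : K)⁻¹ := by
    rw [← Units.val_mul, ← Units.val_pow_eq_pow_val, ← Units.val_pow_eq_pow_val,
      ← Units.val_pow_eq_pow_val, mul_pow_val_chineseRemainder_symm, Units.val_mul, mul_inv]
  set e := (w.tensorProduct w').equiv w'' φ.toEquiv
  have he (k j) : e (w k ⊗ₜ w' j) = w'' (φ (k, j)) := by
    rw [← Basis.tensorProduct_apply, Basis.equiv_apply]
    rfl
  refine ⟨e, Representation.comp_eq_comp_of_closure_eq_top (ρ := ρ.tprod ρ') closure_x_y _ ?_⟩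
  rintro g (rfl | rfl) <;> refine (w.tensorProduct w').ext fun ⟨k, j⟩ => ?_
  · simp [hw.x_apply, hw'.x_apply, he, hw''.x_apply, hφ_succ]
  · simp [hw.y_apply, hw'.y_apply, he, hw''.y_apply, hφ_pow, ← TensorProduct.smul_tmul',
      TensorProduct.tmul_smul, smul_smul, mul_comm]

end Heis

theorem stmt_14_general (ζ ζ' : ℂˣ) (hζ : IsOfFinOrder ζ) (hζ' : IsOfFinOrder ζ')
    (hcop : (orderOf ζ).Coprime (orderOf ζ'))
    (V V' V'' : Type) [AddCommGroup V] [Module ℂ V]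
    [AddCommGroup V'] [Module ℂ V']
    [AddCommGroup V''] [Module ℂ V'']
    (ρ : Representation ℂ Heis V) (ρ' : Representation ℂ Heis V')
    (ρ'' : Representation ℂ Heis V'')
    (hz : ρ Heis.z = (ζ : ℂ) • (1 : Module.End ℂ V))
    (hz' : ρ' Heis.z = (ζ' : ℂ) • (1 : Module.End ℂ V'))
    (hz'' : ρ'' Heis.z = ((ζ * ζ' : ℂˣ) : ℂ) • (1 : Module.End ℂ V''))
    (hdim : Module.finrank ℂ V = orderOf ζ)
    (hdim' : Module.finrank ℂ V' = orderOf ζ')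
    (hdim'' : Module.finrank ℂ V'' = orderOf (ζ * ζ'))
    (hx : Module.End.HasEigenvalue (ρ Heis.x) 1)
    (hy : Module.End.HasEigenvalue (ρ Heis.y) 1)
    (hx' : Module.End.HasEigenvalue (ρ' Heis.x) 1)
    (hy' : Module.End.HasEigenvalue (ρ' Heis.y) 1)
    (hx'' : Module.End.HasEigenvalue (ρ'' Heis.x) 1)
    (hy'' : Module.End.HasEigenvalue (ρ'' Heis.y) 1) :
    orderOf (ζ * ζ') = orderOf ζ * orderOf ζ' ∧
    Module.finrank ℂ (V ⊗[ℂ] V') = orderOf ζ * orderOf ζ' ∧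
    ∃ e : (V ⊗[ℂ] V') ≃ₗ[ℂ] V'',
      ∀ g : Heis,
        e.toLinearMap ∘ₗ TensorProduct.map (ρ g) (ρ' g) = (ρ'' g) ∘ₗ e.toLinearMap := by
  have := NeZero.of_pos hζ.orderOf_pos
  have := NeZero.of_pos hζ'.orderOf_pos
  have horder : orderOf (ζ * ζ') = orderOf ζ * orderOf ζ' :=
    (Commute.all ζ ζ').orderOf_mul_eq_mul_orderOf_of_coprime hcop
  obtain ⟨w, hw⟩ := Heis.exists_isStandardBasis rfl hz hdim hx hy
  obtain ⟨w', hw'⟩ := Heis.exists_isStandardBasis rfl hz' hdim' hx' hy'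
  obtain ⟨w'', hw''⟩ := Heis.exists_isStandardBasis horder hz'' (hdim''.trans horder) hx'' hy''
  refine ⟨horder, ?_, hw.exists_tensorProduct_equiv hcop hw' hw''⟩
  rw [finrank_tensorProduct, hdim, hdim']

/-- For the integer Heisenberg group, if `ζ` and `ζ'` are roots of unity of coprime
orders, then `V_ζ ⊗ V_{ζ'} ≅ V_{ζζ'}` — where `V_ξ` is characterized as the irreducible
representation of dimension `|ξ|` on which `z` acts by the scalar `ξ` and on which `x`
and `y` both have eigenvalue `1`.  In particular `dim (V_ζ ⊗ V_{ζ'}) = |ζ|·|ζ'| = |ζζ'|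
= dim V_{ζζ'}`. -/
theorem stmt_14 (ζ ζ' : ℂˣ) (hζ : IsOfFinOrder ζ) (hζ' : IsOfFinOrder ζ')
    (hcop : (orderOf ζ).Coprime (orderOf ζ'))
    (V V' V'' : Type) [AddCommGroup V] [Module ℂ V] [FiniteDimensional ℂ V]
    [AddCommGroup V'] [Module ℂ V'] [FiniteDimensional ℂ V']
    [AddCommGroup V''] [Module ℂ V''] [FiniteDimensional ℂ V'']
    (ρ : Representation ℂ Heis V) (ρ' : Representation ℂ Heis V')
    (ρ'' : Representation ℂ Heis V'')
    (hirr : IsIrred ρ) (hirr' : IsIrred ρ') (hirr'' : IsIrred ρ'')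
    (hz : ρ Heis.z = (ζ : ℂ) • (1 : Module.End ℂ V))
    (hz' : ρ' Heis.z = (ζ' : ℂ) • (1 : Module.End ℂ V'))
    (hz'' : ρ'' Heis.z = ((ζ * ζ' : ℂˣ) : ℂ) • (1 : Module.End ℂ V''))
    (hdim : Module.finrank ℂ V = orderOf ζ)
    (hdim' : Module.finrank ℂ V' = orderOf ζ')
    (hdim'' : Module.finrank ℂ V'' = orderOf (ζ * ζ'))
    (hx : Module.End.HasEigenvalue (ρ Heis.x) 1)
    (hy : Module.End.HasEigenvalue (ρ Heis.y) 1)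
    (hx' : Module.End.HasEigenvalue (ρ' Heis.x) 1)
    (hy' : Module.End.HasEigenvalue (ρ' Heis.y) 1)
    (hx'' : Module.End.HasEigenvalue (ρ'' Heis.x) 1)
    (hy'' : Module.End.HasEigenvalue (ρ'' Heis.y) 1) :
    orderOf (ζ * ζ') = orderOf ζ * orderOf ζ' ∧
    Module.finrank ℂ (V ⊗[ℂ] V') = orderOf ζ * orderOf ζ' ∧
    ∃ e : (V ⊗[ℂ] V') ≃ₗ[ℂ] V'',
      ∀ g : Heis,
        e.toLinearMap ∘ₗ TensorProduct.map (ρ g) (ρ' g) = (ρ'' g) ∘ₗ e.toLinearMap :=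
  stmt_14_general ζ ζ' hζ hζ' hcop V V' V'' ρ ρ' ρ'' hz hz' hz'' hdim hdim' hdim'' hx hy hx' hy'
    hx'' hy''
end

section
/- Let A be the graded-commutative ring with A₀ = ⊕_{ζ∈μ_∞} ℤ·a_ζ, A₁ = ⊕_{ζ} (ℤ·b_ζ ⊕ ℤ·c_ζ), A₂ = ⊕_{ζ} ℤ·d_ζ, with products a_ζ a_{ζ'} = (|ζ||ζ'|/|ζζ'|) a_{ζζ'}, a_ζ b_{ζ'} = |ζ| b_{ζζ'}, a_ζ c_{ζ'} = |ζ| c_{ζζ'}, a_ζ d_{ζ'} = (|ζ||ζζ'|/|ζ'|) d_{ζζ'}, b_ζ c_{ζ'} = |ζζ'| d_{ζζ'}. Then these products are well-defined (the coefficients |ζ||ζ'|/|ζζ'| and |ζ||ζζ'|/|ζ'| are positive integers) and make A an associative graded-commutative ring with unit a₁. -/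
/-- The group `μ_∞` of all complex roots of unity. -/
def muInf : Subgroup ℂˣ where
  carrier := {z | ∃ n : ℕ, 0 < n ∧ z ^ n = 1}
  one_mem' := ⟨1, one_pos, one_pow _⟩
  mul_mem' := by
    rintro a b ⟨n, hn, ha⟩ ⟨m, hm, hb⟩
    exact ⟨n * m, Nat.mul_pos hn hm, by
      rw [mul_pow, pow_mul, ha, one_pow, one_mul, mul_comm n, pow_mul, hb, one_pow]⟩
  inv_mem' := by
    rintro a ⟨n, hn, ha⟩
    exact ⟨n, hn, by rw [inv_pow, ha, inv_one]⟩

/-- The underlying `ℤ`-module of the graded ring `A = H_*(Irr H)`, with components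
`(deg 0, deg 1 "b"-part, deg 1 "c"-part, deg 2)`, each free on `μ_∞`. -/
abbrev GrA : Type := (muInf →₀ ℤ) × (muInf →₀ ℤ) × (muInf →₀ ℤ) × (muInf →₀ ℤ)

/-- Convolution product on `μ_∞ →₀ ℤ` twisted by structure constants `c`. -/
noncomputable def conv (c : muInf → muInf → ℤ) (f g : muInf →₀ ℤ) : muInf →₀ ℤ :=
  f.sum fun ζ u => g.sum fun ζ' v => Finsupp.single (ζ * ζ') (u * v * c ζ ζ')

/-- The structure constant `|ζ||ζ'|/|ζζ'|` for `a_ζ a_{ζ'}`. -/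
noncomputable def n0 (ζ ζ' : muInf) : ℤ := ((orderOf ζ * orderOf ζ') / orderOf (ζ * ζ') : ℕ)

/-- The structure constant `|ζ||ζζ'|/|ζ'|` for `a_ζ d_{ζ'}`. -/
noncomputable def nad (ζ ζ' : muInf) : ℤ := ((orderOf ζ * orderOf (ζ * ζ')) / orderOf ζ' : ℕ)

/-- The multiplication of the graded ring `A`:
`a_ζ a_{ζ'} = (|ζ||ζ'|/|ζζ'|) a_{ζζ'}`, `a_ζ b_{ζ'} = |ζ| b_{ζζ'}`,
`a_ζ c_{ζ'} = |ζ| c_{ζζ'}`, `a_ζ d_{ζ'} = (|ζ||ζζ'|/|ζ'|) d_{ζζ'}`,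
`b_ζ c_{ζ'} = |ζζ'| d_{ζζ'}`, with degree-1 elements anticommuting and squaring to
zero, and even elements central. -/
noncomputable def grMul (x y : GrA) : GrA :=
  ( conv n0 x.1 y.1
  , conv (fun ζ _ => (orderOf ζ : ℤ)) x.1 y.2.1
      + conv (fun _ ζ' => (orderOf ζ' : ℤ)) x.2.1 y.1
  , conv (fun ζ _ => (orderOf ζ : ℤ)) x.1 y.2.2.1
      + conv (fun _ ζ' => (orderOf ζ' : ℤ)) x.2.2.1 y.1
  , conv nad x.1 y.2.2.2 + conv (fun ζ ζ' => nad ζ' ζ) x.2.2.2 y.1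
      + conv (fun ζ ζ' => (orderOf (ζ * ζ') : ℤ)) x.2.1 y.2.2.1
      - conv (fun ζ ζ' => (orderOf (ζ * ζ') : ℤ)) x.2.2.1 y.2.1 )

/-- The unit `a₁`. -/
noncomputable def grOne : GrA := (Finsupp.single 1 1, 0, 0, 0)

/-! Every structure constant is a coboundary: for weights `w_a = |·|`, `w_b = w_c = 1`,
`w_d = 1/|·|` on the four families of generators, the constant of `x_ζ y_{ζ'}` is
`w_x(ζ) w_y(ζ') / w_{xy}(ζζ')`. Equivalently, `a_ζ ↦ |ζ| e_ζ`, `b_ζ ↦ e_ζ β`, `c_ζ ↦ e_ζ γ`,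
`d_ζ ↦ |ζ|⁻¹ e_ζ βγ` embeds `A` into `ℚ[μ_∞] ⊗ Λ(β, γ)`. The cocycle identities needed for
associativity therefore hold in `ℚ`, and the integrality of the constants is the divisibility
`|ζζ'| ∣ |ζ||ζ'|` in an abelian group. -/

theorem orderOf_dvd_mul_orderOf_mul {G : Type*} [CommGroup G] (x y : G) :
    orderOf y ∣ orderOf x * orderOf (x * y) := by
  simpa [orderOf_inv] using (Commute.all x⁻¹ (x * y)).orderOf_mul_dvd_mul_orderOf

namespace muInf

theorem isOfFinOrder (ζ : muInf) : IsOfFinOrder ζ := by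
  obtain ⟨n, hn, h⟩ := ζ.2
  exact isOfFinOrder_iff_pow_eq_one.mpr ⟨n, hn, Subtype.ext (by simpa using h)⟩

theorem orderOf_pos (ζ : muInf) : 0 < orderOf ζ := (isOfFinOrder ζ).orderOf_pos

end muInf

theorem n0_mul_orderOf (ζ ζ' : muInf) :
    n0 ζ ζ' * orderOf (ζ * ζ') = orderOf ζ * orderOf ζ' := by
  rw [n0]
  exact_mod_cast Nat.div_mul_cancel ((Commute.all ζ ζ').orderOf_mul_dvd_mul_orderOf)

theorem nad_mul_orderOf (ζ ζ' : muInf) :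
    nad ζ ζ' * orderOf ζ' = orderOf ζ * orderOf (ζ * ζ') := by
  rw [nad]
  exact_mod_cast Nat.div_mul_cancel (orderOf_dvd_mul_orderOf_mul ζ ζ')

theorem n0_pos (ζ ζ' : muInf) : 0 < n0 ζ ζ' := by
  have h := n0_mul_orderOf ζ ζ'
  have := muInf.orderOf_pos ζ; have := muInf.orderOf_pos ζ'; have := muInf.orderOf_pos (ζ * ζ')
  nlinarith

theorem nad_pos (ζ ζ' : muInf) : 0 < nad ζ ζ' := by
  have h := nad_mul_orderOf ζ ζ'
  have := muInf.orderOf_pos ζ; have := muInf.orderOf_pos ζ'; have := muInf.orderOf_pos (ζ * ζ')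
  nlinarith

/-- The weight of the generators `a_ζ`. -/
noncomputable def ordQ (ζ : muInf) : ℚˣ :=
  Units.mk0 (orderOf ζ) (Nat.cast_ne_zero.mpr (muInf.orderOf_pos ζ).ne')

@[simp] theorem val_ordQ (ζ : muInf) : (ordQ ζ : ℚ) = orderOf ζ := rfl

/-- `c ζ ζ' = w₁ ζ * w₂ ζ' / w₃ (ζ * ζ')`. -/
def IsCoboundary (c : muInf → muInf → ℤ) (w₁ w₂ w₃ : muInf → ℚˣ) : Prop :=
  ∀ ζ ζ', (c ζ ζ' : ℚ) * w₃ (ζ * ζ') = w₁ ζ * w₂ ζ'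

theorem IsCoboundary.cocycle {c₁ c₂ c₃ c₄ : muInf → muInf → ℤ} {u v w uv vw uvw : muInf → ℚˣ}
    (h₁ : IsCoboundary c₁ u v uv) (h₂ : IsCoboundary c₂ uv w uvw)
    (h₃ : IsCoboundary c₃ v w vw) (h₄ : IsCoboundary c₄ u vw uvw) (ζ ζ' ζ'' : muInf) :
    c₁ ζ ζ' * c₂ (ζ * ζ') ζ'' = c₃ ζ' ζ'' * c₄ ζ (ζ' * ζ'') := by
  have key : ((c₁ ζ ζ' * c₂ (ζ * ζ') ζ'' : ℤ) : ℚ) * uvw (ζ * ζ' * ζ'')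
      = ((c₃ ζ' ζ'' * c₄ ζ (ζ' * ζ'') : ℤ) : ℚ) * uvw (ζ * ζ' * ζ'') := by
    push_cast
    calc _ = (c₁ ζ ζ' : ℚ) * (c₂ (ζ * ζ') ζ'' * uvw (ζ * ζ' * ζ'')) := by ring
      _ = (u ζ * v ζ' * w ζ'' : ℚ) := by rw [h₂, ← mul_assoc, h₁]
      _ = (c₃ ζ' ζ'' : ℚ) * (c₄ ζ (ζ' * ζ'') * uvw (ζ * (ζ' * ζ''))) := by
        rw [h₄, mul_left_comm, h₃]; ring
      _ = _ := by rw [mul_assoc ζ]; ring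
  exact_mod_cast (Units.mul_left_inj _).mp key

theorem isCoboundary_n0 : IsCoboundary n0 ordQ ordQ ordQ := fun ζ ζ' => by
  simpa using congrArg (Int.cast : ℤ → ℚ) (n0_mul_orderOf ζ ζ')

theorem isCoboundary_nad : IsCoboundary nad ordQ ordQ⁻¹ ordQ⁻¹ := fun ζ ζ' => by
  have h : (nad ζ ζ' : ℚ) * ordQ ζ' = ordQ ζ * ordQ (ζ * ζ') := by
    simpa using congrArg (Int.cast : ℤ → ℚ) (nad_mul_orderOf ζ ζ')
  have := (ordQ ζ').ne_zero; have := (ordQ (ζ * ζ')).ne_zero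
  simp only [Pi.inv_apply, Units.val_inv_eq_inv_val]
  field_simp
  linear_combination h

theorem isCoboundary_nad_swap : IsCoboundary (fun ζ ζ' => nad ζ' ζ) ordQ⁻¹ ordQ ordQ⁻¹ :=
  fun ζ ζ' => by rw [mul_comm ζ, mul_comm (ordQ⁻¹ ζ : ℚ)]; exact isCoboundary_nad ζ' ζ

theorem isCoboundary_orderOf_left : IsCoboundary (fun ζ _ => orderOf ζ) ordQ 1 1 :=
  fun _ _ => by simp

theorem isCoboundary_orderOf_right : IsCoboundary (fun _ ζ' => orderOf ζ') 1 ordQ 1 :=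
  fun _ _ => by simp

theorem isCoboundary_orderOf_mul : IsCoboundary (fun ζ ζ' => orderOf (ζ * ζ')) 1 1 ordQ⁻¹ :=
  fun ζ ζ' => by simpa using (ordQ (ζ * ζ')).mul_inv

section conv

variable (c : muInf → muInf → ℤ)

@[simp] theorem conv_zero_left (g : muInf →₀ ℤ) : conv c 0 g = 0 := by simp [conv]

@[simp] theorem conv_zero_right (f : muInf →₀ ℤ) : conv c f 0 = 0 := by simp [conv]

theorem conv_add_left (f f' g : muInf →₀ ℤ) : conv c (f + f') g = conv c f g + conv c f' g := by
  refine Finsupp.sum_add_index' (fun _ => by simp) (fun ζ u u' => ?_)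
  rw [← Finsupp.sum_add]
  exact Finsupp.sum_congr fun ζ' _ => by rw [add_mul, add_mul, Finsupp.single_add]

theorem conv_add_right (f g g' : muInf →₀ ℤ) : conv c f (g + g') = conv c f g + conv c f g' := by
  rw [conv, conv, conv, ← Finsupp.sum_add]
  refine Finsupp.sum_congr fun ζ _ => Finsupp.sum_add_index' (fun _ => by simp) fun ζ' v v' => ?_
  rw [mul_add, add_mul, Finsupp.single_add]

theorem conv_sub_left (f f' g : muInf →₀ ℤ) : conv c (f - f') g = conv c f g - conv c f' g :=
  map_sub (AddMonoidHom.mk' (conv c · g) fun f f' => conv_add_left c f f' g) f f'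

theorem conv_sub_right (f g g' : muInf →₀ ℤ) : conv c f (g - g') = conv c f g - conv c f g' :=
  map_sub (AddMonoidHom.mk' (conv c f) (conv_add_right c f)) g g'

theorem conv_single_single (ζ ζ' : muInf) (u v : ℤ) :
    conv c (Finsupp.single ζ u) (Finsupp.single ζ' v) = Finsupp.single (ζ * ζ') (u * v * c ζ ζ') := by
  rw [conv, Finsupp.sum_single_index (by simp), Finsupp.sum_single_index (by simp)]

theorem conv_comm {c'} (hc : ∀ ζ ζ', c ζ ζ' = c' ζ' ζ) (f g : muInf →₀ ℤ) :
    conv c f g = conv c' g f := by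
  rw [conv, conv, Finsupp.sum_comm]
  refine Finsupp.sum_congr fun ζ' _ => Finsupp.sum_congr fun ζ _ => ?_
  rw [mul_comm ζ ζ', hc ζ ζ', mul_comm (f ζ)]

theorem conv_single_one_left (hc : ∀ ζ, c 1 ζ = 1) (f : muInf →₀ ℤ) :
    conv c (Finsupp.single 1 1) f = f := by
  rw [conv, Finsupp.sum_single_index (by simp)]
  simp [hc, Finsupp.sum_single]

theorem conv_single_one_right (hc : ∀ ζ, c ζ 1 = 1) (f : muInf →₀ ℤ) :
    conv c f (Finsupp.single 1 1) = f := by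
  rw [conv_comm c (c' := fun ζ ζ' => c ζ' ζ) (fun _ _ => rfl)]
  exact conv_single_one_left _ hc f

theorem conv_assoc {c₁ c₂ c₃ c₄ : muInf → muInf → ℤ}
    (hc : ∀ ζ ζ' ζ'', c₁ ζ ζ' * c₂ (ζ * ζ') ζ'' = c₃ ζ' ζ'' * c₄ ζ (ζ' * ζ''))
    (f g h : muInf →₀ ℤ) : conv c₂ (conv c₁ f g) h = conv c₄ f (conv c₃ g h) := by
  induction f using Finsupp.induction_linear with
  | zero => simp
  | add f f' hf hf' => simp only [conv_add_left, hf, hf']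
  | single ζ u =>
  induction g using Finsupp.induction_linear with
  | zero => simp
  | add g g' hg hg' => simp only [conv_add_left, conv_add_right, hg, hg']
  | single ζ' v =>
  induction h using Finsupp.induction_linear with
  | zero => simp
  | add h h' hh hh' => simp only [conv_add_right, hh, hh']
  | single ζ'' w =>
  simp only [conv_single_single, mul_assoc ζ]
  congr 1
  linear_combination u * v * w * hc ζ ζ' ζ''

end conv

theorem conv_assoc_of_isCoboundary {c₁ c₂ c₃ c₄ : muInf → muInf → ℤ}
    {u v w uv vw uvw : muInf → ℚˣ}
    (h₁ : IsCoboundary c₁ u v uv) (h₂ : IsCoboundary c₂ uv w uvw)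
    (h₃ : IsCoboundary c₃ v w vw) (h₄ : IsCoboundary c₄ u vw uvw)
    (f g h : muInf →₀ ℤ) : conv c₂ (conv c₁ f g) h = conv c₄ f (conv c₃ g h) :=
  conv_assoc (h₁.cocycle h₂ h₃ h₄) f g h

theorem add_grMul (x x' y : GrA) : grMul (x + x') y = grMul x y + grMul x' y := by
  refine Prod.ext ?_ (Prod.ext ?_ (Prod.ext ?_ ?_)) <;>
    simp only [grMul, Prod.fst_add, Prod.snd_add, conv_add_left] <;> abel

theorem grMul_add (x y y' : GrA) : grMul x (y + y') = grMul x y + grMul x y' := by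
  refine Prod.ext ?_ (Prod.ext ?_ (Prod.ext ?_ ?_)) <;>
    simp only [grMul, Prod.fst_add, Prod.snd_add, conv_add_right] <;> abel

theorem grMul_assoc (x y z : GrA) : grMul (grMul x y) z = grMul x (grMul y z) := by
  have aa := isCoboundary_n0
  have ad := isCoboundary_nad
  have da := isCoboundary_nad_swap
  have ab := isCoboundary_orderOf_left
  have ba := isCoboundary_orderOf_right
  have bc := isCoboundary_orderOf_mul
  refine Prod.ext ?_ (Prod.ext ?_ (Prod.ext ?_ ?_)) <;>
    simp only [grMul, conv_add_left, conv_add_right, conv_sub_left, conv_sub_right,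
      conv_assoc_of_isCoboundary aa aa aa aa, conv_assoc_of_isCoboundary aa ab ab ab,
      conv_assoc_of_isCoboundary ab ba ba ab, conv_assoc_of_isCoboundary ba ba aa ba,
      conv_assoc_of_isCoboundary aa ad ad ad, conv_assoc_of_isCoboundary ad da da ad,
      conv_assoc_of_isCoboundary da da aa da, conv_assoc_of_isCoboundary bc da ba bc,
      conv_assoc_of_isCoboundary ab bc bc ad, conv_assoc_of_isCoboundary ba bc ab bc] <;>
    abel

theorem grOne_grMul (x : GrA) : grMul grOne x = x := by
  refine Prod.ext ?_ (Prod.ext ?_ (Prod.ext ?_ ?_)) <;>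
    simp only [grMul, grOne, conv_zero_left, add_zero, sub_zero]
  · exact conv_single_one_left _ (fun ζ => by simp [n0, Nat.div_self (muInf.orderOf_pos ζ)]) _
  · exact conv_single_one_left _ (fun _ => by simp) _
  · exact conv_single_one_left _ (fun _ => by simp) _
  · exact conv_single_one_left _ (fun ζ => by simp [nad, Nat.div_self (muInf.orderOf_pos ζ)]) _

theorem grMul_grOne (x : GrA) : grMul x grOne = x := by
  refine Prod.ext ?_ (Prod.ext ?_ (Prod.ext ?_ ?_)) <;>
    simp only [grMul, grOne, conv_zero_right, add_zero, zero_add, sub_zero]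
  · exact conv_single_one_right _ (fun ζ => by simp [n0, Nat.div_self (muInf.orderOf_pos ζ)]) _
  · exact conv_single_one_right _ (fun _ => by simp) _
  · exact conv_single_one_right _ (fun _ => by simp) _
  · exact conv_single_one_right _ (fun ζ => by simp [nad, Nat.div_self (muInf.orderOf_pos ζ)]) _

theorem grMul_comm_of_even (x y : GrA) (hb : x.2.1 = 0) (hc : x.2.2.1 = 0) :
    grMul x y = grMul y x := by
  refine Prod.ext ?_ (Prod.ext ?_ (Prod.ext ?_ ?_)) <;>
    simp only [grMul, hb, hc, conv_zero_left, conv_zero_right, add_zero, zero_add, sub_zero]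
  · exact conv_comm _ (fun ζ ζ' => by simp [n0, mul_comm]) _ _
  · exact conv_comm _ (fun _ _ => rfl) _ _
  · exact conv_comm _ (fun _ _ => rfl) _ _
  · rw [conv_comm nad (fun _ _ => rfl) x.1, conv_comm _ (c' := nad) (fun _ _ => rfl) x.2.2.2]
    abel

theorem grMul_anticomm_of_odd (x y : GrA) (hxa : x.1 = 0) (hxd : x.2.2.2 = 0)
    (hya : y.1 = 0) (hyd : y.2.2.2 = 0) : grMul x y = -grMul y x := by
  have hcomm (f g : muInf →₀ ℤ) :
      conv (fun ζ ζ' => orderOf (ζ * ζ')) f g = conv (fun ζ ζ' => orderOf (ζ * ζ')) g f :=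
    conv_comm _ (fun ζ ζ' => by rw [mul_comm]) f g
  refine Prod.ext ?_ (Prod.ext ?_ (Prod.ext ?_ ?_)) <;>
    simp only [grMul, hxa, hxd, hya, hyd, conv_zero_left, conv_zero_right, add_zero, zero_add,
      Prod.fst_neg, Prod.snd_neg, neg_zero]
  rw [hcomm x.2.1, hcomm x.2.2.1]
  abel

/-- The products of the graded ring `A` are well defined (the structure constants
`|ζ||ζ'|/|ζζ'|` and `|ζ||ζζ'|/|ζ'|` are positive integers) and make `A` an associative
graded-commutative ring with unit `a₁`: multiplication is bilinear, associative, unital,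
even elements are central, and odd (degree-1) elements anticommute. -/
theorem stmt_16 :
    -- well-definedness of the structure constants: exact divisibility and positivity
    (∀ ζ ζ' : muInf, orderOf (ζ * ζ') ∣ orderOf ζ * orderOf ζ') ∧
    (∀ ζ ζ' : muInf, orderOf ζ' ∣ orderOf ζ * orderOf (ζ * ζ')) ∧
    (∀ ζ ζ' : muInf, 0 < n0 ζ ζ' ∧ 0 < nad ζ ζ') ∧
    -- distributivity (bilinearity)
    (∀ x x' y : GrA, grMul (x + x') y = grMul x y + grMul x' y) ∧
    (∀ x y y' : GrA, grMul x (y + y') = grMul x y + grMul x y') ∧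
    -- associativity
    (∀ x y z : GrA, grMul (grMul x y) z = grMul x (grMul y z)) ∧
    -- unit
    (∀ x : GrA, grMul grOne x = x ∧ grMul x grOne = x) ∧
    -- graded commutativity: even elements are central …
    (∀ x y : GrA, x.2.1 = 0 → x.2.2.1 = 0 → grMul x y = grMul y x) ∧
    -- … and purely odd elements anticommute
    (∀ x y : GrA, x.1 = 0 → x.2.2.2 = 0 → y.1 = 0 → y.2.2.2 = 0 →
      grMul x y = -grMul y x) :=
  ⟨fun ζ ζ' => (Commute.all ζ ζ').orderOf_mul_dvd_mul_orderOf, orderOf_dvd_mul_orderOf_mul,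
    fun ζ ζ' => ⟨n0_pos ζ ζ', nad_pos ζ ζ'⟩, add_grMul, grMul_add, grMul_assoc,
    fun x => ⟨grOne_grMul x, grMul_grOne x⟩, grMul_comm_of_even, grMul_anticomm_of_odd⟩
end
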